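/- Let R be an artinian local ring that is stretched (i.e., dim_k m²/m³ ≤ 1) and non-Gorenstein. Then the socle of R is not contained in m². -/

import Mathlib

open IsLocalRing

/-- The length of a module, defined as the Krull dimension of its submodule lattice. -/
noncomputable def mlen (R M : Type*) [CommRing R] [AddCommGroup M] [Module R M] : ℕ∞ :=
  (Order.krullDim (Submodule R M)).unbotD 0

/-- The length of the subquotient `A/B` of the ring, for ideals `A`, `B` (used with `B ≤ A`). -/
noncomputable def qlen {R : Type*} [CommRing R] (A B : Ideal R) : ℕ∞ :=
  mlen R (↥A ⧸ Submodule.comap (Submodule.subtype A) B)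

/-- A regular local ring: a Noetherian local ring whose maximal ideal can be generated by
`Krull dimension` many elements. -/
def IsRegularLocal (S : Type*) [CommRing S] [IsLocalRing S] : Prop :=
  IsNoetherianRing S ∧ ∃ s : Finset S, Ideal.span (s : Set S) = maximalIdeal S ∧
    (s.card : WithBot ℕ∞) = ringKrullDim S


private lemma two_elt_krullDim_eq_one {α : Type*} [PartialOrder α] [BoundedOrder α]
    (hall : ∀ a : α, a = ⊥ ∨ a = ⊤) (hbt : (⊥ : α) ≠ ⊤) : Order.krullDim α = 1 := by
  apply le_antisymm
  · apply iSup_le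
    intro p
    by_contra hlen
    push_neg at hlen
    have h2 : 2 ≤ p.length := by
      have : (1 : ℕ) < p.length := by exact_mod_cast hlen
      omega
    have l01 : p.toFun ⟨0, by omega⟩ < p.toFun ⟨1, by omega⟩ :=
      p.strictMono (by simp [Fin.lt_def])
    have l12 : p.toFun ⟨1, by omega⟩ < p.toFun ⟨2, by omega⟩ :=
      p.strictMono (by simp [Fin.lt_def])
    rcases hall (p.toFun ⟨1, by omega⟩) with h | h
    · rw [h] at l01; exact not_lt_bot l01
    · rw [h] at l12; exact not_top_lt l12
  · let q : LTSeries α := (RelSeries.singleton _ (⊥ : α)).snoc ⊤ (lt_of_le_of_ne bot_le hbt)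
    have hq := Order.LTSeries.length_le_krullDim q
    have : q.length = 1 := rfl
    rw [this] at hq
    exact_mod_cast hq

private lemma qlen_gen {R : Type*} [CommRing R] {A B : Ideal R} (h : qlen A B ≤ 1)
    {x : R} (hx : x ∈ A) (hx3 : x ∉ B) : A ≤ Ideal.span {x} ⊔ B := by
  set M := ↥A ⧸ Submodule.comap (Submodule.subtype A) B with hM
  set xb : M := Submodule.Quotient.mk ⟨x, hx⟩ with hxb
  have hx0 : xb ≠ 0 := by
    rw [hxb, ne_eq, Submodule.Quotient.mk_eq_zero]
    exact hx3
  have hN : Submodule.span R {xb} = ⊤ := by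
    by_contra hNT
    have h1 : (⊥ : Submodule R M) < Submodule.span R {xb} :=
      lt_of_le_of_ne bot_le fun hc => hx0 (Submodule.span_singleton_eq_bot.mp hc.symm)
    have h2 : Submodule.span R {xb} < ⊤ := lt_of_le_of_ne le_top hNT
    let c : LTSeries (Submodule R M) :=
      ((RelSeries.singleton _ (⊥ : Submodule R M)).snoc (Submodule.span R {xb}) (by exact h1)).snoc ⊤ (by exact h2)
    have hlen := Order.LTSeries.length_le_krullDim c
    have hc2 : c.length = 2 := rfl
    rw [hc2] at hlen
    have h' : (Order.krullDim (Submodule R M)).unbotD 0 ≤ 1 := h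
    have hne : Order.krullDim (Submodule R M) ≠ ⊥ := by
      intro hk
      rw [hk] at hlen
      exact absurd hlen (by simp)
    obtain ⟨v, hk⟩ := WithBot.ne_bot_iff_exists.mp hne
    rw [← hk, WithBot.unbotD_coe] at h'
    rw [← hk] at hlen
    have h2v : (2 : ℕ∞) ≤ v := by
      rw [show ((2:ℕ) : WithBot ℕ∞) = ((2:ℕ∞) : WithBot ℕ∞) by rfl] at hlen
      exact WithBot.coe_le_coe.mp hlen
    have hcontra := h2v.trans h'
    norm_num at hcontra
  intro z hz
  have hzt : (Submodule.Quotient.mk ⟨z, hz⟩ : M) ∈ Submodule.span R {xb} := hN ▸ trivial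
  obtain ⟨r, hr⟩ := Submodule.mem_span_singleton.mp hzt
  have hz0 : (Submodule.Quotient.mk ((⟨z, hz⟩ : ↥A) - r • ⟨x, hx⟩) : M) = 0 := by
    rw [Submodule.Quotient.mk_sub, Submodule.Quotient.mk_smul, ← hxb, hr, sub_self]
  have hmem := (Submodule.Quotient.mk_eq_zero _).mp hz0
  have hB : z - r * x ∈ B := hmem
  have hzeq : z = r * x + (z - r * x) := by ring
  rw [hzeq]
  exact Submodule.add_mem_sup (Ideal.mem_span_singleton.mpr ⟨r, mul_comm r x⟩) hB

/-- An artinian stretched (`dim_k m²/m³ ≤ 1`) non-Gorenstein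
(`dim_k soc R ≠ 1`) local ring has its socle not contained in `m²`. -/
theorem socle_not_le_sq_of_stretched {R : Type*} [CommRing R] [IsLocalRing R] [IsArtinianRing R]
    (hstretched : qlen ((maximalIdeal R) ^ 2) ((maximalIdeal R) ^ 3) ≤ 1)
    (hnotGor : mlen R ↥(Submodule.colon (⊥ : Ideal R) (maximalIdeal R)) ≠ 1) :
    ¬ Submodule.colon (⊥ : Ideal R) (maximalIdeal R) ≤ (maximalIdeal R) ^ 2 := by
  intro hle
  classical
  set m : Ideal R := maximalIdeal R with hmdef
  set soc : Ideal R := Submodule.colon (⊥ : Ideal R) m with hsocdef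
  -- nilpotency of m
  have hnil : ∃ n, m ^ n = ⊥ := by
    obtain ⟨n, hn⟩ := IsArtinianRing.isNilpotent_jacobson_bot (R := R)
    refine ⟨n, ?_⟩
    rw [hmdef, ← IsLocalRing.jacobson_eq_maximalIdeal (⊥ : Ideal R) bot_ne_top]
    rw [← Ideal.zero_eq_bot]
    exact hn
  set n₀ := Nat.find hnil with hn₀def
  have hn₀ : m ^ n₀ = ⊥ := Nat.find_spec hnil
  have hpos : 0 < n₀ := by
    rcases Nat.eq_zero_or_pos n₀ with h | h
    · rw [h, pow_zero, Ideal.one_eq_top] at hn₀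
      have h1 : (1 : R) ∈ (⊥ : Ideal R) := hn₀ ▸ Submodule.mem_top
      rw [Submodule.mem_bot] at h1
      exact absurd h1 one_ne_zero
    · exact h
  set s := n₀ - 1 with hsdef
  have hs1 : m ^ (s + 1) = ⊥ := by rw [show s + 1 = n₀ by omega]; exact hn₀
  have hs2 : m ^ s ≠ ⊥ := Nat.find_min hnil (by omega)
  have msoc : m ^ s ≤ soc := by
    intro z hz
    rw [hsocdef]
    rw [Submodule.mem_colon]
    intro p hp
    rw [smul_eq_mul]
    have hmem : z * p ∈ m ^ s * m := Ideal.mul_mem_mul hz hp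
    rw [← pow_succ, hs1] at hmem
    exact hmem
  by_cases h2 : m ^ 2 = ⊥
  · exact hs2 (le_bot_iff.mp (msoc.trans (hle.trans h2.le)))
  -- m² ≠ m³
  have hne23 : m ^ 2 ≠ m ^ 3 := by
    intro heq
    apply h2
    have key : ∀ k, m ^ 2 = m ^ (2 + k) := by
      intro k
      induction k with
      | zero => rfl
      | succ k ih =>
        have hcalc : m ^ (2 + (k + 1)) = m ^ 2 := by
          calc m ^ (2 + (k + 1)) = m ^ (2 + k) * m := by
                rw [show 2 + (k + 1) = (2 + k) + 1 by omega, pow_succ]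
            _ = m ^ 2 * m := by rw [← ih]
            _ = m ^ 3 := (pow_succ m 2).symm
            _ = m ^ 2 := heq.symm
        exact hcalc.symm
    have hk := key n₀
    have : m ^ (2 + n₀) ≤ m ^ n₀ := Ideal.pow_le_pow_right (by omega)
    rw [← hk, hn₀] at this
    exact le_bot_iff.mp this
  -- a product generator of m² mod m³
  obtain ⟨a, ha, b, hb, hab⟩ : ∃ a ∈ m, ∃ b ∈ m, a * b ∉ m ^ 3 := by
    by_contra hc
    push_neg at hc
    have hmm : m * m ≤ m ^ 3 := Ideal.mul_le.mpr hc
    rw [← pow_two] at hmm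
    exact hne23 (le_antisymm hmm (Ideal.pow_le_pow_right (by omega)))
  set y := a * b with hy
  have hyy : y ∈ m ^ 2 := by rw [pow_two]; exact Ideal.mul_mem_mul ha hb
  have hgen := qlen_gen hstretched hyy hab
  -- m² = (y)
  have hm2 : m ^ 2 = Ideal.span {y} := by
    have key : ∀ k, m ^ 2 ≤ Ideal.span {y} ⊔ m ^ (3 + k) := by
      intro k
      induction k with
      | zero => exact hgen
      | succ k ih =>
        have hstep : m ^ (3 + k) ≤ Ideal.span {y} ⊔ m ^ (3 + (k + 1)) := by
          have e1 : m ^ (3 + k) = m ^ (1 + k) * m ^ 2 := by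
            rw [← pow_add, show 1 + k + 2 = 3 + k by omega]
          calc m ^ (3 + k) = m ^ (1 + k) * m ^ 2 := e1
            _ ≤ m ^ (1 + k) * (Ideal.span {y} ⊔ m ^ 3) := Ideal.mul_mono_right hgen
            _ = m ^ (1 + k) * Ideal.span {y} ⊔ m ^ (1 + k) * m ^ 3 := Ideal.mul_sup _ _ _
            _ ≤ Ideal.span {y} ⊔ m ^ (3 + (k + 1)) := by
                apply sup_le_sup Ideal.mul_le_right
                apply le_of_eq
                rw [← pow_add, show 1 + k + 3 = 3 + (k + 1) by omega]
        exact ih.trans (sup_le le_sup_left hstep)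
    have hkey := key n₀
    have hbot : m ^ (3 + n₀) = ⊥ :=
      le_bot_iff.mp ((Ideal.pow_le_pow_right (by omega)).trans hn₀.le)
    rw [hbot, sup_bot_eq] at hkey
    exact le_antisymm hkey (Ideal.span_le.mpr (Set.singleton_subset_iff.mpr hyy))
  -- key computation
  have key1 : ∀ c ∈ m, ∃ r : R, c * y = r * (b * y) := by
    intro c hc
    have hca : c * a ∈ m ^ 2 := by rw [pow_two]; exact Ideal.mul_mem_mul hc ha
    rw [hm2] at hca
    obtain ⟨r, hr⟩ := Ideal.mem_span_singleton.mp hca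
    rw [hy] at hr
    exact ⟨r, by rw [hy]; linear_combination b * hr⟩
  -- all higher powers are principal
  have pairs : ∀ j : ℕ, m ^ (2 * j + 2) = Ideal.span {y ^ (j + 1)} ∧
      m ^ (2 * j + 3) = Ideal.span {b * y ^ (j + 1)} := by
    intro j
    induction j with
    | zero =>
      constructor
      · norm_num; exact hm2
      · have h3 : m ^ (2 * 0 + 3) = Ideal.span {y} * m := by
          norm_num [pow_succ, hm2]
        rw [h3]
        apply le_antisymm
        · intro z hz
          obtain ⟨c, hc, hcz⟩ := Ideal.mem_span_singleton_mul.mp hz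
          obtain ⟨r, hr⟩ := key1 c hc
          rw [pow_one, Ideal.mem_span_singleton]
          exact ⟨r, by linear_combination -hcz + hr⟩
        · rw [Ideal.span_le, Set.singleton_subset_iff]
          rw [pow_one, mul_comm b y]
          exact Ideal.mul_mem_mul (Ideal.mem_span_singleton_self y) hb
    | succ j ih =>
      have heven : m ^ (2 * (j + 1) + 2) = Ideal.span {y ^ (j + 1 + 1)} := by
        rw [show 2 * (j + 1) + 2 = (2 * j + 3) + 1 by omega, pow_succ, ih.2]
        apply le_antisymm
        · intro z hz
          obtain ⟨c, hc, hcz⟩ := Ideal.mem_span_singleton_mul.mp hz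
          have hcb : c * b ∈ Ideal.span {y} := by
            rw [← hm2, pow_two]; exact Ideal.mul_mem_mul hc hb
          obtain ⟨r, hr⟩ := Ideal.mem_span_singleton.mp hcb
          rw [Ideal.mem_span_singleton]
          exact ⟨r, by linear_combination -hcz + y ^ (j + 1) * hr⟩
        · rw [Ideal.span_le, Set.singleton_subset_iff]
          have heq : y ^ (j + 1 + 1) = (b * y ^ (j + 1)) * a := by rw [hy]; ring
          rw [heq]
          exact Ideal.mul_mem_mul (Ideal.mem_span_singleton_self _) ha
      refine ⟨heven, ?_⟩
      rw [show 2 * (j + 1) + 3 = (2 * (j + 1) + 2) + 1 by omega, pow_succ, heven]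
      apply le_antisymm
      · intro z hz
        obtain ⟨c, hc, hcz⟩ := Ideal.mem_span_singleton_mul.mp hz
        obtain ⟨r, hr⟩ := key1 c hc
        rw [Ideal.mem_span_singleton]
        exact ⟨r, by linear_combination -hcz + y ^ (j + 1) * hr⟩
      · rw [Ideal.span_le, Set.singleton_subset_iff]
        have heq : b * y ^ (j + 1 + 1) = y ^ (j + 1 + 1) * b := by ring
        rw [heq]
        exact Ideal.mul_mem_mul (Ideal.mem_span_singleton_self _) hb
  have principal : ∀ i : ℕ, ∃ g : R, m ^ (2 + i) = Ideal.span {g} := by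
    intro i
    rcases Nat.even_or_odd i with ⟨j, hj⟩ | ⟨j, hj⟩
    · exact ⟨y ^ (j + 1), by rw [show 2 + i = 2 * j + 2 by omega]; exact (pairs j).1⟩
    · exact ⟨b * y ^ (j + 1), by rw [show 2 + i = 2 * j + 3 by omega]; exact (pairs j).2⟩
  -- climb the socle up
  have hclimb : ∀ d : ℕ, 2 + d ≤ s → soc ≤ m ^ (2 + d) := by
    intro d
    induction d with
    | zero => intro _; exact hle
    | succ d ih =>
      intro hds
      have ihle := ih (by omega)
      obtain ⟨g, hg⟩ := principal d
      intro z hz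
      have hzg : z ∈ Ideal.span {g} := by rw [← hg]; exact ihle hz
      obtain ⟨r, hr⟩ := Ideal.mem_span_singleton.mp hzg
      by_cases hrm : r ∈ m
      · rw [show 2 + (d + 1) = (2 + d) + 1 by omega, pow_succ]
        have hgm : g ∈ m ^ (2 + d) := by rw [hg]; exact Ideal.mem_span_singleton_self g
        rw [hr]
        exact Ideal.mul_mem_mul hgm hrm
      · have hru : IsUnit r := IsLocalRing.notMem_maximalIdeal.mp hrm
        obtain ⟨u, rfl⟩ := hru
        have hgsoc : g ∈ soc := by
          have hgz : g = z * ↑u⁻¹ := by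
            rw [hr, mul_assoc, Units.mul_inv, mul_one]
          rw [hgz]
          exact Ideal.mul_mem_right _ _ hz
        have hbot : m ^ (2 + (d + 1)) = ⊥ := by
          rw [show 2 + (d + 1) = (2 + d) + 1 by omega, pow_succ, hg]
          apply le_antisymm _ bot_le
          refine Ideal.mul_le.mpr ?_
          intro w hw v hv
          obtain ⟨t, ht⟩ := Ideal.mem_span_singleton.mp hw
          have hgv : g * v = 0 := by
            have hcol := Submodule.mem_colon.mp hgsoc v hv
            rwa [smul_eq_mul, Submodule.mem_bot] at hcol
          rw [Submodule.mem_bot, ht]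
          linear_combination t * hgv
        exact absurd (le_bot_iff.mp ((Ideal.pow_le_pow_right hds).trans hbot.le)) hs2
  have hsge2 : 2 ≤ s := by
    by_contra hs'
    push_neg at hs'
    have : m ^ 2 ≤ m ^ n₀ := Ideal.pow_le_pow_right (by omega)
    rw [hn₀] at this
    exact h2 (le_bot_iff.mp this)
  have hsocle : soc ≤ m ^ s := by
    have hcl := hclimb (s - 2) (by omega)
    rwa [show 2 + (s - 2) = s by omega] at hcl
  have hsoceq : soc = m ^ s := le_antisymm hsocle msoc
  obtain ⟨g, hg⟩ := principal (s - 2)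
  rw [show 2 + (s - 2) = s by omega] at hg
  have hgne : g ≠ 0 := by
    rintro rfl
    exact hs2 (by rw [hg]; exact Submodule.span_singleton_eq_bot.mpr rfl)
  have hgsoc : g ∈ soc := by
    rw [hsoceq, hg]; exact Ideal.mem_span_singleton_self g
  have hann : ∀ c ∈ m, g * c = 0 := by
    intro c hc
    have hcol := Submodule.mem_colon.mp hgsoc c hc
    rwa [smul_eq_mul, Submodule.mem_bot] at hcol
  apply hnotGor
  have hall : ∀ N : Submodule R ↥soc, N = ⊥ ∨ N = ⊤ := by
    intro N
    rcases eq_or_ne N ⊥ with hN | hN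
    · exact Or.inl hN
    · right
      obtain ⟨z, hzN, hz0⟩ := Submodule.exists_mem_ne_zero_of_ne_bot hN
      have hz1 : (z : R) ∈ Ideal.span {g} := by rw [← hg, ← hsoceq]; exact z.2
      obtain ⟨r, hr⟩ := Ideal.mem_span_singleton.mp hz1
      have hru : IsUnit r := by
        by_contra hrm
        have hrmem : r ∈ m := (IsLocalRing.mem_maximalIdeal r).mpr hrm
        have : (z : R) = 0 := by rw [hr]; exact hann r hrmem
        exact hz0 (Subtype.ext this)
      obtain ⟨u, rfl⟩ := hru
      rw [eq_top_iff]
      intro w _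
      have hw1 : (w : R) ∈ Ideal.span {g} := by rw [← hg, ← hsoceq]; exact w.2
      obtain ⟨t, ht⟩ := Ideal.mem_span_singleton.mp hw1
      have hwz : w = (t * ↑u⁻¹) • z := by
        apply Subtype.ext
        rw [SetLike.val_smul, smul_eq_mul, hr, ht]
        linear_combination (-(t * g)) * u.inv_mul
      rw [hwz]
      exact Submodule.smul_mem _ _ hzN
  have hbt : (⊥ : Submodule R ↥soc) ≠ ⊤ := by
    intro hcontra
    have hmem : (⟨g, hgsoc⟩ : ↥soc) ∈ (⊥ : Submodule R ↥soc) := hcontra ▸ Submodule.mem_top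
    rw [Submodule.mem_bot] at hmem
    exact hgne (congrArg Subtype.val hmem)
  show (Order.krullDim (Submodule R ↥soc)).unbotD 0 = 1
  rw [two_elt_krullDim_eq_one hall hbt]
  rfl
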